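/- (Prasad–Robinson) Let R be a commutative ring and A an m×n matrix over R with D_{k+1}(A) = 0, and let c_{α,β} ∈ R (indexed by strictly increasing α : Fin k → Fin m, β : Fin k → Fin n) satisfy Σ_{α,β} c_{α,β}·μ_{α,β}(A) = 1. Assume moreover that c_{α,β}·c_{α',β'} = c_{α,β'}·c_{α',β} for all α, α', β, β'. Then B := Σ_{α,β} c_{α,β}·Adj_{α,β}(A) satisfies both A·B·A = A and B·A·B = B, i.e. B is a generalized inverse of A. -/

import Mathlib

open Matrix Polynomial
open scoped Classical

/-- The `k`-th determinantal ideal of a matrix. -/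
noncomputable def detIdeal {R : Type*} [CommRing R] {m n : ℕ} (k : ℕ)
    (A : Matrix (Fin m) (Fin n) R) : Ideal R :=
  Ideal.span {x | ∃ (α : Fin k → Fin m) (β : Fin k → Fin n),
    StrictMono α ∧ StrictMono β ∧ x = (A.submatrix α β).det}

/-- `Adj_{α,β}(A) = (I_n)_{·,β} · adjugate(A_{α,β}) · (I_m)_{α,·}`. -/
noncomputable def adjSub {R : Type*} [CommRing R] {m n k : ℕ}
    (A : Matrix (Fin m) (Fin n) R) (α : Fin k → Fin m) (β : Fin k → Fin n) :
    Matrix (Fin n) (Fin m) R :=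
  (1 : Matrix (Fin n) (Fin n) R).submatrix id β * (A.submatrix α β).adjugate *
    (1 : Matrix (Fin m) (Fin m) R).submatrix α id

/-!
Write `μ_{α,β} = det A_{α,β}`. Bordering `A_{α,β}` by a row `i` and a column `j` gives a
`(k+1)`-minor, which vanishes; the Schur-complement expansion of that bordered determinant says
`A_{·,β} adj(A_{α,β}) A_{α,·} = μ_{α,β} • A`, i.e. `A Adj_{α,β} A = μ_{α,β} • A`, and summing against
`c` gives `A B A = A`.

For `B A B = B`, fix `(α₀, β₀)` with minor `μ₀`. The same identity factors `μ₀ • A = U V` through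
`k × k`, with `U = A_{·,β₀} adj(A_{α₀,β₀})` and `V = A_{α₀,·}`, so every `k × k` submatrix of
`μ₀ • A` is a product `U_α V_β`; multiplicativity of the adjugate then gives
`adj(A_{α,β}) A_{α,β'} adj(A_{α',β'}) = μ_{α,β'} adj(A_{α',β})` up to the factor `μ₀^{2k}`. With the
rank-one condition on `c` this yields `μ₀^{2k} • (B A B - B) = 0`. Since the `c_{α₀,β₀} μ₀` sum to
`1`, they generate the unit ideal, and `B A B = B`.
-/

open Finset

namespace Matrix

variable {R : Type*} [CommRing R]

section Schur

variable {κ ι : Type*} [Fintype κ] [Fintype ι] [DecidableEq κ] [DecidableEq ι]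

theorem det_fromBlocks_mul_det_pow (M : Matrix κ κ R) (B : Matrix κ ι R) (C : Matrix ι κ R)
    (D : Matrix ι ι R) :
    (fromBlocks M B C D).det * M.det ^ Fintype.card ι =
      M.det * (M.det • D - C * M.adjugate * B).det := by
  have h : fromBlocks M B C D * fromBlocks 1 (-(M.adjugate * B)) 0 (M.det • 1)
      = fromBlocks M 0 C (M.det • D - C * M.adjugate * B) := by
    rw [fromBlocks_multiply]
    congr 1 <;> simp [← Matrix.mul_assoc, mul_adjugate, sub_eq_neg_add, Matrix.mul_smul]
  have := congrArg det h
  rwa [det_mul, det_fromBlocks_zero₂₁, det_fromBlocks_zero₁₂, det_one, one_mul, det_smul, det_one,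
    mul_one] at this

theorem det_fromBlocks_mul_det_pow_pred [Nonempty ι] (M : Matrix κ κ R) (B : Matrix κ ι R)
    (C : Matrix ι κ R) (D : Matrix ι ι R) :
    (fromBlocks M B C D).det * M.det ^ (Fintype.card ι - 1) =
      (M.det • D - C * M.adjugate * B).det := by
  -- In `R[X]` the determinant of `M + X` is monic, so it can be cancelled; then set `X = 0`.
  let g : Matrix κ κ R[X] := M.map Polynomial.C + (Polynomial.X : R[X]) • 1
  let φ : R[X] →+* R := Polynomial.evalRingHom 0
  have hφC : ⇑φ ∘ Polynomial.C = id := by ext; simp [φ]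
  have hg : g.map φ = M := by ext; simp [g, φ]
  have hdet : φ g.det = M.det := by rw [RingHom.map_det]; exact congrArg det hg
  have hadj : g.adjugate.map φ = M.adjugate := by rw [← hg]; exact φ.map_adjugate g
  have hreg : IsLeftRegular g.det := by
    refine (Polynomial.Monic.isRegular ?_).left
    simp only [g, Polynomial.Monic.def, ← Polynomial.leadingCoeff_det_X_one_add_C M, add_comm]
  have key := det_fromBlocks_mul_det_pow g (B.map Polynomial.C) (C.map Polynomial.C)
    (D.map Polynomial.C)
  rw [← Nat.sub_one_add_one Fintype.card_ne_zero, pow_succ, ← mul_assoc, mul_comm _ g.det] at key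
  have := congrArg φ (hreg key)
  rw [map_mul, map_pow, hdet, RingHom.map_det, RingHom.map_det, RingHom.mapMatrix_apply,
    RingHom.mapMatrix_apply, fromBlocks_map, Matrix.map_sub _ (map_sub φ),
    Matrix.map_smul' _ _ _ (map_mul φ), hdet, Matrix.map_mul, Matrix.map_mul] at this
  simpa only [hg, hadj, Matrix.map_map, hφC, Matrix.map_id] using this

end Schur

theorem adjugate_mul_submatrix_mul_adjugate_of_mul_eq_smul {ι₁ ι₂ κ : Type*} [Fintype κ]
    [DecidableEq κ] {A : Matrix ι₁ ι₂ R} {U : Matrix ι₁ κ R} {V : Matrix κ ι₂ R} {r : R}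
    (hUV : U * V = r • A) (α α' : κ → ι₁) (β β' : κ → ι₂) :
    r ^ (2 * Fintype.card κ) •
        ((A.submatrix α β).adjugate * A.submatrix α β' * (A.submatrix α' β').adjugate) =
      r ^ (2 * Fintype.card κ) • ((A.submatrix α β').det • (A.submatrix α' β).adjugate) := by
  cases isEmpty_or_nonempty κ
  · exact Subsingleton.elim _ _
  obtain ⟨c, hc⟩ : ∃ c, Fintype.card κ = c + 1 := Nat.exists_eq_add_one.mpr Fintype.card_pos
  have hsub : ∀ (α : κ → ι₁) (β : κ → ι₂),
      U.submatrix α id * V.submatrix id β = r • A.submatrix α β := fun α β => by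
    rw [← submatrix_mul _ _ _ _ _ Function.bijective_id, hUV]; rfl
  have hadj : ∀ (α : κ → ι₁) (β : κ → ι₂), (V.submatrix id β).adjugate *
      (U.submatrix α id).adjugate = r ^ c • (A.submatrix α β).adjugate := fun α β => by
    rw [← adjugate_mul_distrib, hsub, adjugate_smul, hc, Nat.add_sub_cancel]
  have hdet : ∀ (α : κ → ι₁) (β : κ → ι₂), (U.submatrix α id).det * (V.submatrix id β).det
      = r ^ (c + 1) * (A.submatrix α β).det := fun α β => by
    rw [← det_mul, hsub, det_smul, hc]
  rw [hc]
  calc r ^ (2 * (c + 1)) •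
        ((A.submatrix α β).adjugate * A.submatrix α β' * (A.submatrix α' β').adjugate)
      = r • ((r ^ c • (A.submatrix α β).adjugate) * (r • A.submatrix α β') *
          (r ^ c • (A.submatrix α' β').adjugate)) := by
        simp only [Matrix.smul_mul, Matrix.mul_smul, smul_smul]
        ring_nf
    _ = r • ((V.submatrix id β).adjugate *
          (((U.submatrix α id).adjugate * U.submatrix α id) *
            (V.submatrix id β' * (V.submatrix id β').adjugate)) * (U.submatrix α' id).adjugate) := by
        rw [← hadj, ← hsub, ← hadj]; simp only [Matrix.mul_assoc]
    _ = r • (((U.submatrix α id).det * (V.submatrix id β').det) •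
          ((V.submatrix id β).adjugate * (U.submatrix α' id).adjugate)) := by
        rw [adjugate_mul, mul_adjugate, smul_mul_smul_comm, Matrix.one_mul, Matrix.mul_smul,
          Matrix.smul_mul, Matrix.mul_one]
    _ = r ^ (2 * (c + 1)) • ((A.submatrix α β').det • (A.submatrix α' β).adjugate) := by
        rw [hdet, hadj, smul_smul, smul_smul, smul_smul]
        ring_nf

theorem mul_one_submatrix_id {l o p : Type*} [Fintype o] [DecidableEq o] (W : Matrix l o R)
    (β : p → o) : W * (1 : Matrix o o R).submatrix id β = W.submatrix id β := by
  simpa using mul_submatrix_one (Equiv.refl _) β W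

theorem one_submatrix_id_mul {l o p : Type*} [Fintype o] [DecidableEq o] (W : Matrix o l R)
    (α : p → o) : (1 : Matrix o o R).submatrix α id * W = W.submatrix α id := by
  simpa using one_submatrix_mul α (Equiv.refl _) W

end Matrix

theorem eq_zero_of_forall_pow_smul_eq_zero {R M ι : Type*} [CommSemiring R] [AddCommMonoid M]
    [Module R M] {s : Finset ι} {a : ι → R} (hs : ∑ i ∈ s, a i = 1) {N : ℕ} {x : M}
    (h : ∀ i ∈ s, a i ^ N • x = 0) : x = 0 := by
  have hone : (1 : R) ∈ (Submodule.span R {x}).annihilator.radical :=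
    hs ▸ Ideal.sum_mem _ fun i hi => ⟨N, (Submodule.mem_annihilator_span_singleton _ _).mpr (h i hi)⟩
  have htop := Ideal.radical_eq_top.mp ((Ideal.eq_top_iff_one _).mpr hone)
  rw [← one_smul R x]
  exact (Submodule.mem_annihilator_span_singleton x 1).mp (htop ▸ Submodule.mem_top)

section Minors

variable {R : Type*} [CommRing R] {m n k : ℕ}

theorem det_submatrix_fin_mem_detIdeal {r : ℕ} (A : Matrix (Fin m) (Fin n) R) (f : Fin r → Fin m)
    (g : Fin r → Fin n) : (A.submatrix f g).det ∈ detIdeal r A := by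
  by_cases hf : f.Injective
  · by_cases hg : g.Injective
    · set σ := Tuple.sort f
      set τ := Tuple.sort g
      have hsort : A.submatrix f g
          = ((A.submatrix (f ∘ σ) (g ∘ τ)).submatrix σ.symm id).submatrix id τ.symm := by
        ext; simp
      have hminor : (A.submatrix (f ∘ σ) (g ∘ τ)).det ∈ detIdeal r A :=
        Ideal.subset_span ⟨_, _,
          (Tuple.monotone_sort f).strictMono_of_injective (hf.comp σ.injective),
          (Tuple.monotone_sort g).strictMono_of_injective (hg.comp τ.injective), rfl⟩
      rw [hsort, det_permute', det_permute]
      exact Ideal.mul_mem_left _ _ (Ideal.mul_mem_left _ _ hminor)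
    · obtain ⟨a, b, hab, hne⟩ := Function.not_injective_iff.mp hg
      rw [det_zero_of_column_eq hne fun _ => by simp [hab]]
      exact Ideal.zero_mem _
  · obtain ⟨a, b, hab, hne⟩ := Function.not_injective_iff.mp hf
    rw [det_zero_of_row_eq hne (by ext; simp [hab])]
    exact Ideal.zero_mem _

theorem det_submatrix_mem_detIdeal {κ : Type*} [Fintype κ] [DecidableEq κ]
    (A : Matrix (Fin m) (Fin n) R) (f : κ → Fin m) (g : κ → Fin n) :
    (A.submatrix f g).det ∈ detIdeal (Fintype.card κ) A := by
  rw [← det_submatrix_equiv_self (Fintype.equivFin κ).symm, submatrix_submatrix]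
  exact det_submatrix_fin_mem_detIdeal A _ _

theorem submatrix_mul_adjugate_mul_submatrix {A : Matrix (Fin m) (Fin n) R}
    (hA : detIdeal (k + 1) A = ⊥) (α : Fin k → Fin m) (β : Fin k → Fin n) :
    A.submatrix id β * (A.submatrix α β).adjugate * A.submatrix α id =
      (A.submatrix α β).det • A := by
  ext i j
  have hblocks : fromBlocks (A.submatrix α β) (A.submatrix α fun _ : Fin 1 => j)
      (A.submatrix (fun _ : Fin 1 => i) β) (A.submatrix (fun _ => i) fun _ => j)
      = A.submatrix (Sum.elim α fun _ => i) (Sum.elim β fun _ => j) := by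
    ext (_ | _) (_ | _) <;> rfl
  have hzero : (A.submatrix (Sum.elim α fun _ : Fin 1 => i) (Sum.elim β fun _ => j)).det = 0 := by
    have h := det_submatrix_mem_detIdeal A (Sum.elim α fun _ : Fin 1 => i) (Sum.elim β fun _ => j)
    rwa [Fintype.card_sum, Fintype.card_fin, Fintype.card_fin, hA, Ideal.mem_bot] at h
  have h := det_fromBlocks_mul_det_pow_pred (A.submatrix α β) (A.submatrix α fun _ : Fin 1 => j)
    (A.submatrix (fun _ : Fin 1 => i) β) (A.submatrix (fun _ => i) fun _ => j)
  rw [hblocks, hzero, zero_mul, det_unique] at h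
  exact (sub_eq_zero.mp h.symm).symm

end Minors

section GeneralizedInverse

variable {R : Type*} [CommRing R] {m n k : ℕ}

theorem mul_adjSub_mul {A : Matrix (Fin m) (Fin n) R} (hA : detIdeal (k + 1) A = ⊥)
    (α : Fin k → Fin m) (β : Fin k → Fin n) :
    A * adjSub A α β * A = (A.submatrix α β).det • A := by
  rw [← submatrix_mul_adjugate_mul_submatrix hA]
  simp only [adjSub, ← Matrix.mul_assoc, mul_one_submatrix_id]
  simp only [Matrix.mul_assoc, one_submatrix_id_mul]

theorem adjSub_mul_adjSub (A : Matrix (Fin m) (Fin n) R) (α α' : Fin k → Fin m)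
    (β β' : Fin k → Fin n) :
    adjSub A α β * A * adjSub A α' β' = (1 : Matrix (Fin n) (Fin n) R).submatrix id β *
      ((A.submatrix α β).adjugate * A.submatrix α β' * (A.submatrix α' β').adjugate) *
      (1 : Matrix (Fin m) (Fin m) R).submatrix α' id := by
  have h : (1 : Matrix (Fin m) (Fin m) R).submatrix α id * A *
      (1 : Matrix (Fin n) (Fin n) R).submatrix id β' = A.submatrix α β' := by
    rw [one_submatrix_id_mul, mul_one_submatrix_id, submatrix_submatrix]; rfl
  rw [← h]
  simp only [adjSub, Matrix.mul_assoc]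

theorem pow_smul_adjSub_mul_adjSub {A : Matrix (Fin m) (Fin n) R} (hA : detIdeal (k + 1) A = ⊥)
    (α₀ α α' : Fin k → Fin m) (β₀ β β' : Fin k → Fin n) :
    (A.submatrix α₀ β₀).det ^ (2 * k) • (adjSub A α β * A * adjSub A α' β') =
      (A.submatrix α₀ β₀).det ^ (2 * k) • ((A.submatrix α β').det • adjSub A α' β) := by
  have h := adjugate_mul_submatrix_mul_adjugate_of_mul_eq_smul
    (submatrix_mul_adjugate_mul_submatrix hA α₀ β₀) α α' β β'
  rw [Fintype.card_fin] at h
  have h' := congrArg (fun X => (1 : Matrix (Fin n) (Fin n) R).submatrix id β * X *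
    (1 : Matrix (Fin m) (Fin m) R).submatrix α' id) h
  rw [adjSub_mul_adjSub, adjSub]
  simpa only [Matrix.mul_smul, Matrix.smul_mul] using h'

noncomputable def adjSum (A : Matrix (Fin m) (Fin n) R)
    (c : (Fin k → Fin m) → (Fin k → Fin n) → R) (S : Finset (Fin k → Fin m))
    (T : Finset (Fin k → Fin n)) : Matrix (Fin n) (Fin m) R :=
  ∑ α ∈ S, ∑ β ∈ T, c α β • adjSub A α β

variable {A : Matrix (Fin m) (Fin n) R} {c : (Fin k → Fin m) → (Fin k → Fin n) → R}
  {S : Finset (Fin k → Fin m)} {T : Finset (Fin k → Fin n)}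

theorem mul_adjSum_mul (hA : detIdeal (k + 1) A = ⊥)
    (hc : ∑ α ∈ S, ∑ β ∈ T, c α β * (A.submatrix α β).det = 1) :
    A * adjSum A c S T * A = A := by
  calc A * adjSum A c S T * A = ∑ α ∈ S, ∑ β ∈ T, c α β • (A * adjSub A α β * A) := by
        simp only [adjSum, Matrix.mul_sum, Matrix.sum_mul, Matrix.mul_smul, Matrix.smul_mul]
    _ = (∑ α ∈ S, ∑ β ∈ T, c α β * (A.submatrix α β).det) • A := by
        simp only [mul_adjSub_mul hA, smul_smul, sum_smul]
    _ = A := by rw [hc, one_smul]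

theorem smul_adjSum_mul_mul_adjSum {r : R}
    (hc : ∑ α ∈ S, ∑ β ∈ T, c α β * (A.submatrix α β).det = 1)
    (hrank1 : ∀ (α α' : Fin k → Fin m) (β β' : Fin k → Fin n),
      c α β * c α' β' = c α β' * c α' β)
    (hP : ∀ (α α' : Fin k → Fin m) (β β' : Fin k → Fin n),
      r • (adjSub A α β * A * adjSub A α' β') = r • ((A.submatrix α β').det • adjSub A α' β)) :
    r • (adjSum A c S T * A * adjSum A c S T) = r • adjSum A c S T := by
  calc r • (adjSum A c S T * A * adjSum A c S T)
      = ∑ α' ∈ S, ∑ β' ∈ T, ∑ α ∈ S, ∑ β ∈ T,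
          (c α β * c α' β') • r • (adjSub A α β * A * adjSub A α' β') := by
        simp only [adjSum, Matrix.sum_mul, Matrix.mul_sum, smul_sum, Matrix.smul_mul,
          Matrix.mul_smul, smul_smul]
        exact sum_congr rfl fun _ _ => sum_congr rfl fun _ _ => sum_congr rfl fun _ _ =>
          sum_congr rfl fun _ _ => by ring_nf
    _ = ∑ α' ∈ S, ∑ β' ∈ T, ∑ α ∈ S, ∑ β ∈ T,
          (c α β' * (A.submatrix α β').det) • c α' β • r • adjSub A α' β := by
        refine sum_congr rfl fun α' _ => sum_congr rfl fun β' _ => sum_congr rfl fun α _ =>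
          sum_congr rfl fun β _ => ?_
        rw [hP, hrank1, smul_comm r, smul_smul, smul_smul, smul_smul, smul_smul]
        ring_nf
    _ = ∑ α' ∈ S, ∑ α ∈ S, ∑ β' ∈ T, ∑ β ∈ T,
          (c α β' * (A.submatrix α β').det) • c α' β • r • adjSub A α' β :=
        sum_congr rfl fun _ _ => sum_comm
    _ = ∑ α ∈ S, ∑ α' ∈ S, ∑ β' ∈ T, ∑ β ∈ T,
          (c α β' * (A.submatrix α β').det) • c α' β • r • adjSub A α' β :=
        sum_comm
    _ = (∑ α ∈ S, ∑ β' ∈ T, c α β' * (A.submatrix α β').det) • r • adjSum A c S T := by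
        rw [sum_smul]
        refine sum_congr rfl fun α _ => ?_
        rw [sum_comm, sum_smul]
        refine sum_congr rfl fun β' _ => ?_
        simp only [adjSum, smul_sum, smul_comm r]
    _ = r • adjSum A c S T := by rw [hc, one_smul]

theorem adjSum_mul_mul_adjSum (hA : detIdeal (k + 1) A = ⊥)
    (hc : ∑ α ∈ S, ∑ β ∈ T, c α β * (A.submatrix α β).det = 1)
    (hrank1 : ∀ (α α' : Fin k → Fin m) (β β' : Fin k → Fin n),
      c α β * c α' β' = c α β' * c α' β) :
    adjSum A c S T * A * adjSum A c S T = adjSum A c S T := by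
  refine sub_eq_zero.mp (eq_zero_of_forall_pow_smul_eq_zero (s := S ×ˢ T)
    (a := fun p => c p.1 p.2 * (A.submatrix p.1 p.2).det) (N := 2 * k) (by rwa [sum_product]) ?_)
  rintro ⟨α₀, β₀⟩ -
  rw [mul_pow, mul_smul, smul_sub,
    smul_adjSum_mul_mul_adjSum hc hrank1 (pow_smul_adjSub_mul_adjSub hA α₀ · · β₀ · ·),
    sub_self, smul_zero]

end GeneralizedInverse

/-- Prasad–Robinson. -/
theorem stmt3 {R : Type*} [CommRing R] {m n k : ℕ}
    (A : Matrix (Fin m) (Fin n) R) (hA : detIdeal (k + 1) A = ⊥)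
    (c : (Fin k → Fin m) → (Fin k → Fin n) → R)
    (hc : ∑ α ∈ Finset.univ.filter (fun α : Fin k → Fin m => StrictMono α),
            ∑ β ∈ Finset.univ.filter (fun β : Fin k → Fin n => StrictMono β),
              c α β * (A.submatrix α β).det = 1)
    (hrank1 : ∀ (α α' : Fin k → Fin m) (β β' : Fin k → Fin n),
      c α β * c α' β' = c α β' * c α' β) :
    A * (∑ α ∈ Finset.univ.filter (fun α : Fin k → Fin m => StrictMono α),
          ∑ β ∈ Finset.univ.filter (fun β : Fin k → Fin n => StrictMono β),
            c α β • adjSub A α β) * A = A ∧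
    (∑ α ∈ Finset.univ.filter (fun α : Fin k → Fin m => StrictMono α),
          ∑ β ∈ Finset.univ.filter (fun β : Fin k → Fin n => StrictMono β),
            c α β • adjSub A α β) * A *
      (∑ α ∈ Finset.univ.filter (fun α : Fin k → Fin m => StrictMono α),
          ∑ β ∈ Finset.univ.filter (fun β : Fin k → Fin n => StrictMono β),
            c α β • adjSub A α β) =
      (∑ α ∈ Finset.univ.filter (fun α : Fin k → Fin m => StrictMono α),
          ∑ β ∈ Finset.univ.filter (fun β : Fin k → Fin n => StrictMono β),
            c α β • adjSub A α β) :=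
  ⟨mul_adjSum_mul hA hc, adjSum_mul_mul_adjSum hA hc hrank1⟩
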